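/- arXiv:2204.02652 — 5 statements merged into one kernel-verified Lean document; each statement's English description precedes it below -/
import Mathlib

section
/- Let G be a group, C ≤ G a TI subgroup, and H a normal subgroup of G with H ∩ C ≠ {1}. Then the center Z(H) of H is contained in N_G(C). -/
/-- If `C` is a TI subgroup and `H` a normal subgroup meeting `C` nontrivially,
then the center of `H` is contained in the normalizer of `C`. -/
theorem center_of_normal_le_normalizer {G : Type*} [Group G] (C : Subgroup G)
    (hTI : ∀ g : G, (∃ x : G, x ≠ 1 ∧ x ∈ C ∧ g * x * g⁻¹ ∈ C) → g ∈ Subgroup.normalizer (C : Set G))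
    (H : Subgroup G) (hH : H.Normal)
    (hmeet : ∃ x : G, x ≠ 1 ∧ x ∈ H ∧ x ∈ C) :
    (Subgroup.center H).map H.subtype ≤ Subgroup.normalizer (C : Set G) := by
  rintro g ⟨⟨z, hz⟩, hzc, rfl⟩
  obtain ⟨x, hx1, hxH, hxC⟩ := hmeet
  apply hTI
  refine ⟨x, hx1, hxC, ?_⟩
  have := (Subgroup.mem_center_iff.mp hzc ⟨x, hxH⟩)
  have : z * x = x * z := (congrArg Subtype.val this).symm
  simp only [Subgroup.coe_subtype]
  rw [this]
  simpa using hxC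
end

section
/- Let G be a group, i an involution, and A a normal abelian subgroup of G such that: (1) i inverts A by conjugation; (2) A is 2-divisible (every element of A is a square in A); (3) A contains no involution; (4) [i,g] ∈ A for every g ∈ G. Then G = A·C_G(i) and A ∩ C_G(i) = {1}; in particular G is the internal semidirect product of A by C_G(i). -/
/-- If `i` is an involution inverting a normal abelian `2`-divisible subgroup `A`
without involutions, and `[i,g] ∈ A` for every `g`, then `G = A·C_G(i)` with
`A ∩ C_G(i) = 1`. -/
theorem semidirect_decomposition_of_inverting_involution {G : Type*} [Group G]
    (A : Subgroup G) (hA : A.Normal) (hab : ∀ x ∈ A, ∀ y ∈ A, x * y = y * x)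
    (i : G) (hi2 : i * i = 1) (hi1 : i ≠ 1)
    (hinv : ∀ a ∈ A, i * a * i = a⁻¹)
    (hdiv : ∀ a ∈ A, ∃ b ∈ A, b * b = a)
    (hnoinv : ∀ a ∈ A, a * a = 1 → a = 1)
    (hcomm : ∀ g : G, i⁻¹ * g⁻¹ * i * g ∈ A) :
    (∀ g : G, ∃ a ∈ A, ∃ c ∈ Subgroup.centralizer {i}, g = a * c) ∧
      (∀ x : G, x ∈ A → x ∈ Subgroup.centralizer {i} → x = 1) := by
  have hii : i⁻¹ = i := by
    rw [inv_eq_iff_mul_eq_one, hi2]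
  constructor
  · intro g
    -- t = g * i * g⁻¹ * i ∈ A
    have h1 : g⁻¹ * i⁻¹ * g * i ∈ A := by
      have := (hcomm g)
      have h := A.inv_mem this
      simpa [mul_assoc, hii] using h
    have h2 : g * (g⁻¹ * i⁻¹ * g * i) * g⁻¹ ∈ A := hA.conj_mem _ h1 g
    have ht : g * i * g⁻¹ * i ∈ A := by
      have h3 := A.inv_mem h2
      have e : (g * (g⁻¹ * i⁻¹ * g * i) * g⁻¹)⁻¹ = g * i⁻¹ * g⁻¹ * i := by
        group
      rw [e, hii] at h3
      exact h3
    obtain ⟨a, haA, ha2⟩ := hdiv _ ht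
    refine ⟨a, haA, a⁻¹ * g, ?_, by group⟩
    rw [Subgroup.mem_centralizer_iff]
    intro y hy
    rcases hy with rfl
    -- need: y * (a⁻¹ * g) = (a⁻¹ * g) * y
    have hia : y * a⁻¹ = a * y := by
      have := hinv a⁻¹ (A.inv_mem haA)
      -- y * a⁻¹ * y = a, so y * a⁻¹ = a * y⁻¹ = a * y
      have h4 : y * a⁻¹ = a * y⁻¹ := by
        rw [inv_inv] at this
        calc y * a⁻¹ = (y * a⁻¹ * y) * y⁻¹ := by group
          _ = a * y⁻¹ := by rw [this]
      rwa [hii] at h4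
    calc y * (a⁻¹ * g) = (y * a⁻¹) * g := by group
      _ = a * y * g := by rw [hia]
      _ = a⁻¹ * (a * a) * y * g := by group
      _ = a⁻¹ * (g * y * g⁻¹ * y) * y * g := by rw [ha2]
      _ = a⁻¹ * g * y * g⁻¹ * (y * y) * g := by group
      _ = (a⁻¹ * g) * y := by rw [hi2]; group
  · intro x hxA hxC
    have hc : i * x = x * i := (Subgroup.mem_centralizer_iff.mp hxC) i rfl
    have h5 : i * x * i = x⁻¹ := hinv x hxA
    have h6 : x * (i * i) = x⁻¹ := by rw [← mul_assoc, ← hc, h5]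
    rw [hi2, mul_one] at h6
    exact hnoinv x hxA (mul_eq_one_iff_eq_inv.mpr h6)
end

section
/- Let G be a group with subgroups U ⊴ G and C ≤ G such that G = U·C and U ∩ C = {1}. Assume that for every nontrivial c ∈ C, the map U → U sending u to [u,c] = u⁻¹c⁻¹uc is surjective. Then every element of G not lying in U is conjugate by an element of U to an element of C; equivalently G \ U ⊆ ⋃_{u∈U} u⁻¹Cu. -/
/-- If `G = U ⋊ C` with `U` normal and the maps `u ↦ [u,c]` surjective on `U` for each
nontrivial `c ∈ C`, then every element outside `U` is conjugate by an element of `U`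
to an element of `C`. -/
theorem complement_covers_outside_kernel {G : Type*} [Group G] (U C : Subgroup G)
    (hU : U.Normal)
    (hprod : ∀ g : G, ∃ u ∈ U, ∃ c ∈ C, g = u * c)
    (hint : U ⊓ C = ⊥)
    (hsurj : ∀ c ∈ C, c ≠ 1 → ∀ v ∈ U, ∃ u ∈ U, u⁻¹ * c⁻¹ * u * c = v) :
    ∀ g : G, g ∉ U → ∃ u ∈ U, u * g * u⁻¹ ∈ C := by
  intro g hg
  obtain ⟨u0, hu0, c, hc, rfl⟩ := hprod g
  have hc1 : c ≠ 1 := by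
    rintro rfl
    exact hg (by simpa using hu0)
  obtain ⟨u, hu, heq⟩ := hsurj c⁻¹ (inv_mem hc) (by simpa using hc1) u0 hu0
  refine ⟨u, hu, ?_⟩
  have : u * (u0 * c) * u⁻¹ = c := by
    rw [← heq]; group
  rw [this]; exact hc
end

section
/- Let G be a group and A ≤ G an abelian subgroup such that C_G(A) = A and such that for every nontrivial x ∈ A, the centralizer C_G(x) is abelian. Then A is a TI subgroup: for every g ∈ G, if A^g ∩ A ≠ {1} then A^g = A. -/
/-- If `A` is an abelian subgroup with `C_G(A) = A` such that the centralizer of every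
nontrivial element of `A` is abelian, then `A` is a TI subgroup:
`A^g ∩ A ≠ 1` implies `A^g = A`. -/
theorem self_centralizing_abelian_is_TI {G : Type*} [Group G] (A : Subgroup G)
    (hab : ∀ x ∈ A, ∀ y ∈ A, x * y = y * x)
    (hself : Subgroup.centralizer (A : Set G) = A)
    (hcent : ∀ x ∈ A, x ≠ 1 →
      ∀ y ∈ Subgroup.centralizer {x}, ∀ z ∈ Subgroup.centralizer {x}, y * z = z * y) :
    ∀ g : G, (∃ x : G, x ≠ 1 ∧ x ∈ A ∧ g * x * g⁻¹ ∈ A) →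
      (∀ x : G, g * x * g⁻¹ ∈ A ↔ x ∈ A) := by
  have key : ∀ g : G, (∃ x : G, x ≠ 1 ∧ x ∈ A ∧ g * x * g⁻¹ ∈ A) →
      ∀ z ∈ A, g * z * g⁻¹ ∈ A := by
    rintro g ⟨x, hx1, hxA, hxgA⟩ z hz
    set y := g * x * g⁻¹ with hy
    have hy1 : y ≠ 1 := by
      intro h
      apply hx1
      have : g * x * g⁻¹ = 1 := h
      have := congrArg (fun w => g⁻¹ * w * g) this
      simpa [mul_assoc] using this
    -- every element of A centralizes y
    have hAcent : ∀ a ∈ A, a ∈ Subgroup.centralizer ({y} : Set G) := by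
      intro a ha
      rw [Subgroup.mem_centralizer_iff]
      rintro h rfl
      exact hab y hxgA a ha
    -- g z g⁻¹ centralizes y
    have hzcent : g * z * g⁻¹ ∈ Subgroup.centralizer ({y} : Set G) := by
      rw [Subgroup.mem_centralizer_iff]
      rintro h rfl
      have hc : x * z = z * x := hab x hxA z hz
      calc (g * x * g⁻¹) * (g * z * g⁻¹) = g * (x * z) * g⁻¹ := by group
        _ = g * (z * x) * g⁻¹ := by rw [hc]
        _ = (g * z * g⁻¹) * (g * x * g⁻¹) := by group
    -- hence g z g⁻¹ centralizes A, so lies in A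
    rw [← hself, Subgroup.mem_centralizer_iff]
    intro a ha
    exact hcent y hxgA hy1 a (hAcent a ha) _ hzcent
  intro g ⟨x, hx1, hxA, hxgA⟩ z
  constructor
  · intro hzgA
    have hw : ∃ x : G, x ≠ 1 ∧ x ∈ A ∧ g⁻¹ * x * g⁻¹⁻¹ ∈ A := by
      refine ⟨g * x * g⁻¹, ?_, hxgA, by simpa [mul_assoc] using hxA⟩
      intro h
      apply hx1
      have := congrArg (fun w => g⁻¹ * w * g) h
      simpa [mul_assoc] using this
    have := key g⁻¹ hw (g * z * g⁻¹) hzgA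
    simpa [mul_assoc] using this
  · exact key g ⟨x, hx1, hxA, hxgA⟩ z
end

section
/- Let G be a group and C ≤ G a self-normalizing TI subgroup (N_G(C) = C) such that every conjugate of C contains at most one involution. If i and j are distinct involutions of G, then the product ij does not lie in any conjugate of C unless ij = 1. -/
/-- If `C` is a self-normalizing TI subgroup each of whose conjugates contains at most
one involution, and `i ≠ j` are involutions, then `ij` lies in no conjugate of `C`
unless `ij = 1`. -/
theorem translation_not_in_conjugate {G : Type*} [Group G] (C : Subgroup G)
    (hTI : ∀ g : G, (∃ x : G, x ≠ 1 ∧ x ∈ C ∧ g * x * g⁻¹ ∈ C) → g ∈ Subgroup.normalizer (C : Set G))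
    (hself : Subgroup.normalizer (C : Set G) = C)
    (huniq : ∀ g a b : G, g * a * g⁻¹ ∈ C → a * a = 1 → a ≠ 1 →
      g * b * g⁻¹ ∈ C → b * b = 1 → b ≠ 1 → a = b)
    (i j : G) (hi2 : i * i = 1) (hi1 : i ≠ 1) (hj2 : j * j = 1) (hj1 : j ≠ 1)
    (hij : i ≠ j) :
    ∀ g : G, g * (i * j) * g⁻¹ ∈ C → i * j = 1 := by
  intro g hg
  by_contra hx
  have hii : i⁻¹ = i := by
    rw [inv_eq_iff_mul_eq_one, hi2]
  have hjj : j⁻¹ = j := by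
    rw [inv_eq_iff_mul_eq_one, hj2]
  have hxne : g * (i * j) * g⁻¹ ≠ 1 := by
    intro h
    exact hx ((conj_eq_one_iff (a := g) (b := i * j)).mp (by simpa [mul_assoc] using h))
  have hinv : g * (i * j)⁻¹ * g⁻¹ ∈ C := by
    have : (g * (i * j) * g⁻¹)⁻¹ = g * (i * j)⁻¹ * g⁻¹ := by group
    rw [← this]
    exact C.inv_mem hg
  have outer : ∀ a x : G, (g * a * g⁻¹) * (g * x * g⁻¹) * (g * a * g⁻¹)⁻¹
      = g * (a * x * a⁻¹) * g⁻¹ := by intro a x; group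
  have hiconj : (g * i * g⁻¹) * (g * (i * j) * g⁻¹) * (g * i * g⁻¹)⁻¹
      = g * (i * j)⁻¹ * g⁻¹ := by
    rw [outer, hii, mul_inv_rev, hii, hjj,
      show i * (i * j) * i = i * i * (j * i) by group, hi2, one_mul]
  have hjconj : (g * j * g⁻¹) * (g * (i * j) * g⁻¹) * (g * j * g⁻¹)⁻¹
      = g * (i * j)⁻¹ * g⁻¹ := by
    rw [outer, hjj, mul_inv_rev, hii, hjj,
      show j * (i * j) * j = j * i * (j * j) by group, hj2, mul_one]
  have hiC : g * i * g⁻¹ ∈ C := by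
    have := hTI (g * i * g⁻¹) ⟨g * (i * j) * g⁻¹, hxne, hg, by rw [hiconj]; exact hinv⟩
    rwa [hself] at this
  have hjC : g * j * g⁻¹ ∈ C := by
    have := hTI (g * j * g⁻¹) ⟨g * (i * j) * g⁻¹, hxne, hg, by rw [hjconj]; exact hinv⟩
    rwa [hself] at this
  exact hij (huniq g i j hiC hi2 hi1 hjC hj2 hj1)
end
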